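/- For c_1,…,c_K > 0 and p_1,…,p_K ∈ (0,1), the function L(q) = −∑_{i=1}^n log(∑_{k=1}^K c_{ik} q_k^{Z_i}(1−q_k)^{1−Z_i}) defined on q ∈ (0,1)^K has a positive semidefinite Hessian at every interior point, i.e., −L is concave; moreover the Hessian equals ∑_{i=1}^n v_i v_i^⊤ where v_i ∈ ℝ^K has entries α_{ik}(q) s(Z_i, q_k). -/

import Mathlib

open Finset Matrix

/-!
Since each `Z i` is `0` or `1`, the Bernoulli likelihood `q ^ Z * (1 - q) ^ (1 - Z)` equals the
affine function `(1 - Z) + (2 Z - 1) q`, so every mixture `∑ k, c i k * …` is an affine function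
`e i + ℓ i q` of `q`, positive on `(0,1)^K`. Hence `L` is the log-barrier
`-∑ i, log (e i + ℓ i q)` of finitely many affine functions: it is convex, with Hessian
`∑ i, ℓ i ⊗ ℓ i / (e i + ℓ i q)²`. Finally the score `s(z, q)` is the reciprocal of the
likelihood up to the sign `2z - 1`, so `α_{ik} s(Z_i, q_k) = (2 Z_i - 1) c_{ik} / (e i + ℓ i q)`,
i.e. `v i = ℓ i / (e i + ℓ i q)`.
-/

theorem ConvexOn.fun_finset_sum {𝕜 E β ι : Type*} [Semiring 𝕜] [PartialOrder 𝕜]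
    [AddCommMonoid E] [AddCommMonoid β] [PartialOrder β] [IsOrderedAddMonoid β]
    [SMul 𝕜 E] [Module 𝕜 β] {s : Set E} (hs : Convex 𝕜 s) (t : Finset ι) {f : ι → E → β}
    (h : ∀ i ∈ t, ConvexOn 𝕜 s (f i)) :
    ConvexOn 𝕜 s fun x => ∑ i ∈ t, f i x := by
  classical
  induction t using Finset.cons_induction with
  | empty => simpa using convexOn_const 0 hs
  | cons i t hi ih =>
    simp only [sum_cons]
    exact (h i (mem_cons_self i t)).add (ih fun j hj => h j (mem_cons_of_mem hj))

section LogBarrier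

variable {ι E : Type*} [Fintype ι] [NormedAddCommGroup E] [NormedSpace ℝ E]
  (e : ι → ℝ) (ℓ : ι → StrongDual ℝ E)

noncomputable def logBarrier (x : E) : ℝ :=
  -∑ i, Real.log (e i + ℓ i x)

variable {e ℓ}

theorem convexOn_logBarrier {s : Set E} (hs : Convex ℝ s) (hpos : ∀ x ∈ s, ∀ i, 0 < e i + ℓ i x) :
    ConvexOn ℝ s (logBarrier e ℓ) := by
  have hsum : logBarrier e ℓ = fun x => ∑ i, -Real.log (e i + ℓ i x) := by
    funext x
    simp only [logBarrier, sum_neg_distrib]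
  rw [hsum]
  refine ConvexOn.fun_finset_sum hs _ fun i _ => ?_
  let A : E →ᵃ[ℝ] ℝ := (ℓ i).toLinearMap.toAffineMap + AffineMap.const ℝ E (e i)
  have hA : ∀ x, A x = e i + ℓ i x := fun x => add_comm _ _
  have hlog : ConcaveOn ℝ (A ⁻¹' Set.Ioi 0) (Real.log ∘ A) :=
    strictConcaveOn_log_Ioi.concaveOn.comp_affineMap A
  have hsub : s ⊆ A ⁻¹' Set.Ioi 0 := fun x hx => by simpa [hA] using hpos x hx i
  have hcomp : (fun x => -Real.log (e i + ℓ i x)) = -(Real.log ∘ A) := by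
    funext x
    simp [hA]
  rw [hcomp]
  exact (hlog.subset hsub hs).neg

theorem hasFDerivAt_logBarrier {x : E} (hx : ∀ i, e i + ℓ i x ≠ 0) :
    HasFDerivAt (logBarrier e ℓ) (-∑ i, (e i + ℓ i x)⁻¹ • ℓ i) x :=
  (HasFDerivAt.fun_sum fun i _ => ((ℓ i).hasFDerivAt.const_add (e i)).log (hx i)).neg

theorem iteratedFDeriv_two_logBarrier {x : E} (hx : ∀ i, e i + ℓ i x ≠ 0) (u w : E) :
    iteratedFDeriv ℝ 2 (logBarrier e ℓ) x ![u, w] =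
      ∑ i, ℓ i u * ℓ i w / (e i + ℓ i x) ^ 2 := by
  have hnear : ∀ᶠ y in nhds x, ∀ i, e i + ℓ i y ≠ 0 :=
    Filter.eventually_all.2 fun i =>
      ((ℓ i).continuous.const_add (e i)).continuousAt.eventually_ne (hx i)
  have hfderiv : fderiv ℝ (logBarrier e ℓ) =ᶠ[nhds x] fun y => -∑ i, (e i + ℓ i y)⁻¹ • ℓ i :=
    hnear.mono fun y hy => (hasFDerivAt_logBarrier hy).fderiv
  have hhess : HasFDerivAt (fun y => -∑ i, (e i + ℓ i y)⁻¹ • ℓ i)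
      (-∑ i, ((-((e i + ℓ i x) ^ 2)⁻¹) • ℓ i).smulRight (ℓ i)) x :=
    (HasFDerivAt.fun_sum fun i _ => ((hasDerivAt_inv (hx i)).comp_hasFDerivAt x
      ((ℓ i).hasFDerivAt.const_add (e i))).smul_const (ℓ i)).neg
  rw [iteratedFDeriv_two_apply, hfderiv.fderiv_eq, hhess.fderiv]
  simp only [cons_val_zero, cons_val_one, _root_.neg_apply, _root_.sum_apply,
    ContinuousLinearMap.smulRight_apply, _root_.smul_apply, smul_eq_mul, ← sum_neg_distrib]
  refine sum_congr rfl fun i _ => ?_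
  ring

end LogBarrier

theorem dotProduct_sum_vecMulVec_self_mulVec {ι n R : Type*} [Fintype ι] [Fintype n]
    [CommSemiring R] (v : ι → n → R) (u w : n → R) :
    u ⬝ᵥ (∑ i, vecMulVec (v i) (v i)) *ᵥ w = ∑ i, (u ⬝ᵥ v i) * (v i ⬝ᵥ w) := by
  simp only [sum_mulVec, dotProduct_sum, vecMulVec_mulVec]
  refine sum_congr rfl fun i _ => ?_
  simp [dotProduct_smul, mul_comm]

theorem rpow_mul_one_sub_rpow_of_eq_zero_or_eq_one {z : ℝ} (hz : z = 0 ∨ z = 1) (q : ℝ) :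
    q ^ z * (1 - q) ^ (1 - z) = (1 - z) + (2 * z - 1) * q := by
  rcases hz with rfl | rfl <;> simp only [sub_zero, sub_self, Real.rpow_zero, Real.rpow_one] <;>
    ring

theorem sum_mul_rpow_mul_one_sub_rpow_of_eq_zero_or_eq_one {κ : Type*} [Fintype κ] {z : ℝ}
    (hz : z = 0 ∨ z = 1) (c q : κ → ℝ) :
    ∑ k, c k * q k ^ z * (1 - q k) ^ (1 - z) =
      (1 - z) * ∑ k, c k + (fun k => (2 * z - 1) * c k) ⬝ᵥ q := by
  simp only [dotProduct, mul_sum, ← sum_add_distrib, mul_assoc,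
    rpow_mul_one_sub_rpow_of_eq_zero_or_eq_one hz]
  exact sum_congr rfl fun k _ => by ring

theorem sum_mul_rpow_mul_one_sub_rpow_pos {κ : Type*} [Fintype κ] [Nonempty κ] {c q : κ → ℝ}
    (hc : ∀ k, 0 < c k) (hq : ∀ k, q k ∈ Set.Ioo 0 1) (z : ℝ) :
    0 < ∑ k, c k * q k ^ z * (1 - q k) ^ (1 - z) :=
  sum_pos (fun k _ => mul_pos (mul_pos (hc k) (Real.rpow_pos_of_pos (hq k).1 z))
    (Real.rpow_pos_of_pos (sub_pos.2 (hq k).2) (1 - z))) univ_nonempty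

theorem mul_rpow_mul_one_sub_rpow_div_mul_score {z q : ℝ} (hz : z = 0 ∨ z = 1)
    (hq : q ∈ Set.Ioo 0 1) (a B : ℝ) :
    a * q ^ z * (1 - q) ^ (1 - z) / B * (z / q - (1 - z) / (1 - q)) = (2 * z - 1) * a / B := by
  have : q ≠ 0 := hq.1.ne'
  have : 1 - q ≠ 0 := (sub_pos.2 hq.2).ne'
  rcases hz with rfl | rfl <;> simp only [sub_zero, sub_self, Real.rpow_zero, Real.rpow_one] <;>
    field_simp <;> ring

/-- The negative log-likelihood `L(q) = −∑_i log(∑_k c_{ik} q_k^{Z_i}(1−q_k)^{1−Z_i})`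
is convex on `(0,1)^K` (equivalently `−L` is concave), and its second derivative (Hessian)
at interior points equals `∑_i v_i v_iᵀ` with `v_i = (α_{ik}(q) s(Z_i, q_k))_k`,
which is positive semidefinite. -/
theorem stmt3 (n K : ℕ) (hK : 0 < K)
    (Z : Fin n → ℝ) (hZ : ∀ i, Z i = 0 ∨ Z i = 1)
    (c : Fin n → Fin K → ℝ) (hc : ∀ i k, 0 < c i k)
    (L : (Fin K → ℝ) → ℝ)
    (hL : ∀ q : Fin K → ℝ,
      L q = -∑ i, Real.log (∑ k, c i k * (q k) ^ (Z i) * (1 - q k) ^ (1 - Z i)))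
    (v : Fin n → (Fin K → ℝ) → Fin K → ℝ)
    (hv : ∀ i q k,
      v i q k = (c i k * (q k) ^ (Z i) * (1 - q k) ^ (1 - Z i) /
          ∑ m, c i m * (q m) ^ (Z i) * (1 - q m) ^ (1 - Z i)) *
        (Z i / q k - (1 - Z i) / (1 - q k))) :
    ConvexOn ℝ (Set.pi Set.univ fun _ => Set.Ioo (0 : ℝ) 1) L ∧
    (∀ q ∈ Set.pi Set.univ fun _ => Set.Ioo (0 : ℝ) 1,
      (Matrix.PosSemidef (∑ i, Matrix.vecMulVec (v i q) (v i q))) ∧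
      ∀ u w : Fin K → ℝ,
        iteratedFDeriv ℝ 2 L q ![u, w] =
          u ⬝ᵥ (∑ i, Matrix.vecMulVec (v i q) (v i q)).mulVec w) := by
  set e : Fin n → ℝ := fun i => (1 - Z i) * ∑ k, c i k
  set d : Fin n → Fin K → ℝ := fun i k => (2 * Z i - 1) * c i k
  set ℓ : Fin n → StrongDual ℝ (Fin K → ℝ) :=
    fun i => LinearMap.toContinuousLinearMap (dotProductBilin ℝ ℝ (d i))
  have hℓ : ∀ i q, ℓ i q = d i ⬝ᵥ q := fun i q => by simp [ℓ]
  have hmix : ∀ i q, ∑ k, c i k * q k ^ Z i * (1 - q k) ^ (1 - Z i) = e i + ℓ i q := fun i q => by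
    rw [hℓ, sum_mul_rpow_mul_one_sub_rpow_of_eq_zero_or_eq_one (hZ i)]
  have hLS : L = logBarrier e ℓ := funext fun q => by simp only [hL, hmix, logBarrier]
  have : Nonempty (Fin K) := ⟨⟨0, hK⟩⟩
  have hpos : ∀ q ∈ Set.pi Set.univ fun _ => Set.Ioo (0 : ℝ) 1, ∀ i, 0 < e i + ℓ i q :=
    fun q hq i => hmix i q ▸ sum_mul_rpow_mul_one_sub_rpow_pos (hc i) (fun k => hq k trivial) _
  refine ⟨hLS ▸ convexOn_logBarrier (convex_pi fun _ _ => convex_Ioo 0 1) hpos, fun q hq => ?_⟩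
  have hvq : ∀ i, v i q = (e i + ℓ i q)⁻¹ • d i := fun i => funext fun k => by
    rw [hv, hmix, mul_rpow_mul_one_sub_rpow_div_mul_score (hZ i) (hq k trivial), Pi.smul_apply,
      smul_eq_mul, div_eq_inv_mul]
  refine ⟨posSemidef_sum _ fun i _ => by simpa using posSemidef_vecMulVec_self_star (v i q),
    fun u w => ?_⟩
  rw [hLS, iteratedFDeriv_two_logBarrier (fun i => (hpos q hq i).ne'),
    dotProduct_sum_vecMulVec_self_mulVec]
  refine sum_congr rfl fun i _ => ?_
  rw [hvq, hℓ, hℓ, dotProduct_smul, smul_dotProduct, smul_eq_mul, smul_eq_mul, dotProduct_comm,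
    div_eq_mul_inv, ← inv_pow]
  ring
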